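/- Let (G_k,y) be a mass-action system that admits a positive complex-balanced equilibrium x* ∈ ℝ^n_{>0}. Then every positive equilibrium is complex-balanced: if x ∈ ℝ^n_{>0} satisfies f_k(x) = Y A_k x^Y = 0, then A_k x^Y = 0. -/

import Mathlib

open Matrix BigOperators Finset

variable {V : Type*}

/-- Directed reachability in the digraph with edge set `F`. -/
def dReach (F : Finset (V × V)) : V → V → Prop :=
  Relation.ReflTransGen fun a b => (a, b) ∈ F

/-- Reachability in the underlying undirected graph of the digraph with edge set `F`. -/
def uReach (F : Finset (V × V)) : V → V → Prop :=
  Relation.ReflTransGen fun a b => (a, b) ∈ F ∨ (b, a) ∈ F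

/-- A digraph is strongly connected if every vertex reaches every other vertex. -/
def StronglyConnected (F : Finset (V × V)) : Prop :=
  ∀ i j : V, dReach F i j

/-- A simple digraph has no self-loops. -/
def NoSelfLoops (F : Finset (V × V)) : Prop :=
  ∀ e ∈ F, e.1 ≠ e.2

/-- The edge set `F` contains a directed cycle. -/
def HasDirectedCycle (F : Finset (V × V)) : Prop :=
  ∃ v : V, Relation.TransGen (fun a b => (a, b) ∈ F) v v

/-- The Laplacian matrix `A_k` of the labeled digraph `(V, F, k)`:
`(A_k)_{i,j} = k_{j→i}` if `(j→i) ∈ F`, `(A_k)_{i,i} = -∑_{(i→j)∈F} k_{i→j}`, and `0` otherwise. -/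
noncomputable def kLaplacian [Fintype V] [DecidableEq V]
    (F : Finset (V × V)) (k : V × V → ℝ) : Matrix V V ℝ :=
  Matrix.of fun i j =>
    if i = j then -(∑ e ∈ F.filter (fun e => e.1 = i), k e)
    else if (j, i) ∈ F then k (j, i) else 0

/-- `T` is a directed spanning tree of the strongly connected digraph `E`, rooted at `i`
and directed towards the root: no directed cycle, and every vertex except `i`
is the source of exactly one edge. -/
def IsSpanningTreeTo [DecidableEq V] (E : Finset (V × V)) (i : V)
    (T : Finset (V × V)) : Prop :=
  T ⊆ E ∧ ¬ HasDirectedCycle T ∧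
    ∀ j : V, j ≠ i → (T.filter (fun e => e.1 = j)).card = 1

open scoped Classical in
/-- The tree constant `(K_k)_i = ∑_{T ∈ T_i} ∏_{(j→j')∈T} k_{j→j'}`. -/
noncomputable def treeConst [Fintype V] [DecidableEq V]
    (E : Finset (V × V)) (k : V × V → ℝ) (i : V) : ℝ :=
  ∑ T ∈ E.powerset.filter (fun T => IsSpanningTreeTo E i T), ∏ e ∈ T, k e

/-- The incidence matrix of the digraph with edge set `F`: in the column of edge `(j→j')`,
entry `-1` in row `j`, entry `+1` in row `j'`, and `0` elsewhere. -/
noncomputable def incidence [DecidableEq V] (F : Finset (V × V)) :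
    Matrix V {e : V × V // e ∈ F} ℝ :=
  Matrix.of fun i e =>
    (if (e : V × V).2 = i then (1 : ℝ) else 0) - (if (e : V × V).1 = i then (1 : ℝ) else 0)

/-- Every connected component of the digraph is strongly connected: whenever `j` is reachable
from `i` in the underlying undirected graph, it is reachable by a directed path. -/
def WeaklyReversible {V : Type*} (F : Finset (V × V)) : Prop :=
  ∀ i j : V, uReach F i j → dReach F i j

/-- The underlying undirected simple graph of the digraph with edge set `F`. -/
def toSimpleGraph {V : Type*} (F : Finset (V × V)) : SimpleGraph V :=
  SimpleGraph.fromRel fun a b => (a, b) ∈ F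

/-- `F` is an auxiliary digraph for the digraph `E`: its connected components are directed
trees on the vertex sets of the connected components of `E`. That is, `F` has no self-loops
and no pair of opposite edges, its underlying undirected graph is acyclic (a forest), and
its connected components coincide with those of `E`. -/
def IsAuxiliary {V : Type*} (E F : Finset (V × V)) : Prop :=
  NoSelfLoops F ∧ (∀ a b : V, (a, b) ∈ F → (b, a) ∉ F) ∧
    (toSimpleGraph F).IsAcyclic ∧ (∀ i j : V, uReach F i j ↔ uReach E i j)

/-- `F` is a chain graph for `E`: an auxiliary digraph each of whose components is a chain
`i_1 → i_2 → … → i_m` on the corresponding component of `E`; equivalently, an auxiliary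
digraph in which every vertex has out-degree at most one and in-degree at most one. -/
def IsChainGraphOn {V : Type*} [DecidableEq V] (E F : Finset (V × V)) : Prop :=
  IsAuxiliary E F ∧ (∀ v : V, (F.filter (fun e => e.1 = v)).card ≤ 1) ∧
    (∀ v : V, (F.filter (fun e => e.2 = v)).card ≤ 1)

/-- `F` is a star graph for `E`: an auxiliary digraph each of whose components is a star
`i_1 → i_m, …, i_{m-1} → i_m` on the corresponding component of `E`; equivalently, an
auxiliary digraph in which all edges of one component share the same target (the root). -/
def IsStarGraphOn {V : Type*} (E F : Finset (V × V)) : Prop :=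
  IsAuxiliary E F ∧ ∀ e ∈ F, ∀ e' ∈ F, uReach F e.2 e'.2 → e.2 = e'.2

/-- `T` is a directed spanning tree, rooted at `i` and directed towards the root, of the
connected component of `i` in the digraph `E`: no directed cycle, every vertex of the
component except `i` is the source of exactly one edge, and vertices outside the component
are sources of no edge. -/
def IsCompSpanningTreeTo {V : Type*} [DecidableEq V] (E : Finset (V × V)) (i : V)
    (T : Finset (V × V)) : Prop :=
  T ⊆ E ∧ ¬ HasDirectedCycle T ∧
    (∀ j : V, j ≠ i → uReach E j i → (T.filter (fun e => e.1 = j)).card = 1) ∧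
    (∀ j : V, ¬ uReach E j i → (T.filter (fun e => e.1 = j)).card = 0)

open scoped Classical in
/-- The tree constants, given componentwise: on each component `V^λ`,
`(K_k)_i = ∑_{T ∈ T_i} ∏_{(j→j')∈T} k_{j→j'}` with `T_i` the set of directed spanning trees
of the component rooted at `i`, directed towards the root. -/
noncomputable def treeConstM {V : Type*} [Fintype V] [DecidableEq V]
    (E : Finset (V × V)) (k : V × V → ℝ) (i : V) : ℝ :=
  ∑ T ∈ E.powerset.filter (fun T => IsCompSpanningTreeTo E i T), ∏ e ∈ T, k e

/-- The (generalized) monomial `x^{y(i)} = ∏_j x_j^{(y(i))_j}` (real exponentiation). -/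
noncomputable def monomial {V : Type*} [Fintype V] {n : ℕ}
    (y : V → Fin n → ℝ) (x : Fin n → ℝ) (i : V) : ℝ :=
  ∏ j : Fin n, x j ^ y i j

/-- The matrix `Y ∈ ℝ^{n × V}` whose columns are the complexes `y(i)`. -/
noncomputable def complexMatrix {V : Type*} {n : ℕ} (y : V → Fin n → ℝ) :
    Matrix (Fin n) V ℝ :=
  Matrix.of fun j i => y i j

/-- The mass-action vector field `f_k(x) = Y A_k x^Y`. -/
noncomputable def massActionField {V : Type*} [Fintype V] [DecidableEq V] {n : ℕ}
    (E : Finset (V × V)) (k : V × V → ℝ) (y : V → Fin n → ℝ) (x : Fin n → ℝ) :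
    Fin n → ℝ :=
  (complexMatrix y).mulVec ((kLaplacian E k).mulVec (monomial y x))

/-!
Write `x = xs · e^μ` with `μ = log x - log xs`, so that `x^Y = e^a · xs^Y` with `a = Yᵀ μ`.
Pairing `Y A_k x^Y = 0` with `μ` gives `∑_{i→j} k_{i→j} x^{y(i)} (a_j - a_i) = 0`, and pairing
`A_k xs^Y = 0` with `e^a` gives `∑_{i→j} k_{i→j} xs^{y(i)} (e^{a_j} - e^{a_i}) = 0`. The difference
is `∑_{i→j} k_{i→j} xs^{y(i)} (e^{a_j} - e^{a_i} - e^{a_i} (a_j - a_i))`, whose summands are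
nonnegative by convexity of `exp` and vanish only if `a_i = a_j`. So `a` is constant along edges,
and then `A_k (e^a · xs^Y) = e^a · A_k xs^Y = 0`.
-/

theorem exp_add_mul_sub_le (a b : ℝ) : Real.exp a + Real.exp a * (b - a) ≤ Real.exp b :=
  calc Real.exp a + Real.exp a * (b - a) = Real.exp a * (b - a + 1) := by ring
    _ ≤ Real.exp a * Real.exp (b - a) := by gcongr; exact Real.add_one_le_exp _
    _ = Real.exp b := by rw [← Real.exp_add, add_sub_cancel]

theorem exp_add_mul_sub_lt {a b : ℝ} (hab : a ≠ b) :
    Real.exp a + Real.exp a * (b - a) < Real.exp b :=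
  calc Real.exp a + Real.exp a * (b - a) = Real.exp a * (b - a + 1) := by ring
    _ < Real.exp a * Real.exp (b - a) :=
      mul_lt_mul_of_pos_left (Real.add_one_lt_exp (sub_ne_zero.mpr hab.symm)) (Real.exp_pos a)
    _ = Real.exp b := by rw [← Real.exp_add, add_sub_cancel]

section Laplacian

variable [Fintype V] [DecidableEq V] {E : Finset (V × V)} {k : V × V → ℝ}

theorem kLaplacian_eq_sum_single (hloop : NoSelfLoops E) :
    kLaplacian E k = ∑ e ∈ E, k e • (single e.2 e.1 1 - single e.1 e.1 1) := by
  ext i j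
  simp only [kLaplacian, of_apply, Matrix.sum_apply, Matrix.smul_apply, Matrix.sub_apply,
    single_apply, smul_eq_mul]
  by_cases hij : i = j
  · subst hij
    rw [if_pos rfl, sum_filter, ← sum_neg_distrib]
    refine sum_congr rfl fun e he => ?_
    have hne : e.2 ≠ e.1 := (hloop e he).symm
    by_cases h : e.1 = i
    · subst h; simp [hne]
    · simp [h]
  · have hsrc : ∀ e : V × V, ¬(e.1 = i ∧ e.1 = j) := fun e h => hij (h.1.symm.trans h.2)
    simp only [if_neg hij, hsrc, if_false, sub_zero, mul_ite, mul_one, mul_zero]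
    have htgt : ∀ e : V × V, (e.2 = i ∧ e.1 = j) ↔ (j, i) = e := fun e => by
      rw [Prod.ext_iff, eq_comm (a := j), eq_comm (a := i), and_comm]
    simp only [htgt, sum_ite_eq]

theorem dotProduct_kLaplacian_mulVec (hloop : NoSelfLoops E) (w v : V → ℝ) :
    w ⬝ᵥ (kLaplacian E k *ᵥ v) = ∑ e ∈ E, k e * v e.1 * (w e.2 - w e.1) := by
  simp only [kLaplacian_eq_sum_single hloop, sum_mulVec, dotProduct_sum, smul_mulVec,
    sub_mulVec, single_mulVec_eq, dotProduct_smul, dotProduct_sub, dotProduct_single,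
    smul_eq_mul, mul_one, one_mul]
  exact sum_congr rfl fun e _ => by ring

theorem kLaplacian_mulVec_mul_of_forall_mem_eq {c : V → ℝ} (hc : ∀ e ∈ E, c e.1 = c e.2)
    (v : V → ℝ) :
    kLaplacian E k *ᵥ (fun i => c i * v i) = fun i => c i * (kLaplacian E k *ᵥ v) i := by
  funext i
  simp only [mulVec, dotProduct, mul_sum]
  refine sum_congr rfl fun j _ => ?_
  simp only [kLaplacian, of_apply]
  split_ifs with hij hji
  · subst hij; ring
  · rw [hc _ hji]; ring
  · ring

theorem forall_mem_eq_of_dotProduct_kLaplacian_mulVec_eq_zero (hloop : NoSelfLoops E)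
    (hk : ∀ e ∈ E, 0 < k e) {q : V → ℝ} (hq : ∀ i, 0 < q i) (hbal : kLaplacian E k *ᵥ q = 0)
    {a : V → ℝ} (ha : a ⬝ᵥ (kLaplacian E k *ᵥ fun i => Real.exp (a i) * q i) = 0) :
    ∀ e ∈ E, a e.1 = a e.2 := by
  set gap : V × V → ℝ := fun e =>
    Real.exp (a e.2) - (Real.exp (a e.1) + Real.exp (a e.1) * (a e.2 - a e.1))
  have hsum : ∑ e ∈ E, k e * q e.1 * gap e = 0 := by
    have h1 := dotProduct_kLaplacian_mulVec (k := k) hloop (fun i => Real.exp (a i)) q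
    have h2 := dotProduct_kLaplacian_mulVec (k := k) hloop a (fun i => Real.exp (a i) * q i)
    rw [hbal, dotProduct_zero] at h1
    rw [ha] at h2
    calc ∑ e ∈ E, k e * q e.1 * gap e
        = ∑ e ∈ E, k e * q e.1 * (Real.exp (a e.2) - Real.exp (a e.1))
          - ∑ e ∈ E, k e * (Real.exp (a e.1) * q e.1) * (a e.2 - a e.1) := by
          rw [← sum_sub_distrib]
          exact sum_congr rfl fun e _ => by ring
      _ = 0 := by rw [← h1, ← h2, sub_zero]
  have hgap_nonneg : ∀ e ∈ E, 0 ≤ k e * q e.1 * gap e := fun e he =>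
    mul_nonneg (mul_pos (hk e he) (hq _)).le (sub_nonneg.mpr (exp_add_mul_sub_le _ _))
  intro e he
  by_contra hne
  exact (mul_pos (mul_pos (hk e he) (hq _)) (sub_pos.mpr (exp_add_mul_sub_lt hne))).ne'
    ((sum_eq_zero_iff_of_nonneg hgap_nonneg).mp hsum e he)

theorem kLaplacian_mulVec_exp_mul_eq_zero (hloop : NoSelfLoops E)
    (hk : ∀ e ∈ E, 0 < k e) {q : V → ℝ} (hq : ∀ i, 0 < q i) (hbal : kLaplacian E k *ᵥ q = 0)
    {a : V → ℝ} (ha : a ⬝ᵥ (kLaplacian E k *ᵥ fun i => Real.exp (a i) * q i) = 0) :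
    (kLaplacian E k *ᵥ fun i => Real.exp (a i) * q i) = 0 := by
  have hedge := forall_mem_eq_of_dotProduct_kLaplacian_mulVec_eq_zero hloop hk hq hbal ha
  rw [kLaplacian_mulVec_mul_of_forall_mem_eq (fun e he => by rw [hedge e he]), hbal]
  exact funext fun i => mul_zero _

end Laplacian

section Monomial

variable [Fintype V] {n : ℕ} (y : V → Fin n → ℝ)

theorem monomial_pos {x : Fin n → ℝ} (hx : ∀ j, 0 < x j) (i : V) : 0 < monomial y x i :=
  prod_pos fun j _ => Real.rpow_pos_of_pos (hx j) _

theorem monomial_eq_exp_mul {x x' : Fin n → ℝ} (hx : ∀ j, 0 < x j) (hx' : ∀ j, 0 < x' j)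
    (i : V) :
    monomial y x i =
      Real.exp (((fun j => Real.log (x j) - Real.log (x' j)) ᵥ* complexMatrix y) i)
        * monomial y x' i := by
  simp only [monomial, vecMul, dotProduct, complexMatrix, of_apply, Real.exp_sum,
    ← prod_mul_distrib]
  refine prod_congr rfl fun j _ => ?_
  rw [Real.rpow_def_of_pos (hx j), Real.rpow_def_of_pos (hx' j), ← Real.exp_add]
  congr 1
  ring

end Monomial

theorem positive_equilibria_are_complex_balanced_general
    {V : Type*} [Fintype V] [DecidableEq V] {n : ℕ}
    (E : Finset (V × V)) (hloop : NoSelfLoops E)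
    (k : V × V → ℝ) (hk : ∀ e ∈ E, 0 < k e)
    (y : V → Fin n → ℝ)
    (xs : Fin n → ℝ) (hxs : ∀ j, 0 < xs j)
    (hcb : (kLaplacian E k).mulVec (monomial y xs) = 0)
    (x : Fin n → ℝ) (hx : ∀ j, 0 < x j)
    (heq : massActionField E k y x = 0) :
    (kLaplacian E k).mulVec (monomial y x) = 0 := by
  set a := (fun j => Real.log (x j) - Real.log (xs j)) ᵥ* complexMatrix y
  have hm : monomial y x = fun i => Real.exp (a i) * monomial y xs i :=
    funext (monomial_eq_exp_mul y hx hxs)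
  have ha : a ⬝ᵥ (kLaplacian E k *ᵥ monomial y x) = 0 := by
    rw [← dotProduct_mulVec]
    exact (congrArg _ heq).trans (dotProduct_zero _)
  rw [hm] at ha ⊢
  exact kLaplacian_mulVec_exp_mul_eq_zero hloop hk (monomial_pos y hxs) hcb ha

/-- If a mass-action system admits a positive complex-balanced equilibrium, then every
positive equilibrium is complex-balanced: `f_k(x) = Y A_k x^Y = 0` implies `A_k x^Y = 0`. -/
theorem positive_equilibria_are_complex_balanced
    {V : Type*} [Fintype V] [DecidableEq V] {n : ℕ}
    (E : Finset (V × V)) (hloop : NoSelfLoops E)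
    (k : V × V → ℝ) (hk : ∀ e ∈ E, 0 < k e)
    (y : V → Fin n → ℝ) (hyinj : Function.Injective y) (hynn : ∀ i j, 0 ≤ y i j)
    (xs : Fin n → ℝ) (hxs : ∀ j, 0 < xs j)
    (hcb : (kLaplacian E k).mulVec (monomial y xs) = 0)
    (x : Fin n → ℝ) (hx : ∀ j, 0 < x j)
    (heq : massActionField E k y x = 0) :
    (kLaplacian E k).mulVec (monomial y x) = 0 :=
  positive_equilibria_are_complex_balanced_general E hloop k hk y xs hxs hcb x hx heq
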